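/- arXiv:1712.00500 — 2 statements merged into one kernel-verified Lean document; each statement's English description precedes it below -/
import Mathlib

section
/- Let F ⪯ G ⪯ A be faces, and fix an incidence function for ℧•_F whose restriction to the faces containing G gives an incidence function for ℧•_G. Then ℧•_G, placed in cohomological degrees d_{G/F}, …, d_{A/F} (i.e., shifted so that the summand S_A[∂^{−F′}] sits in degree d_{F′} − d_F), is a subcomplex of ℧•_F, and the induced map on top cohomology H^{d_{A/G}}(℧•_G) → H^{d_{A/F}}(℧•_F) is a degree-preserving surjection of ℤ^d-graded modules. Consequently qdeg H^{d_{A/F}}(℧•_F) ⊆ qdeg H^{d_{A/G}}(℧•_G). -/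
/-!
Common setup: `A` is a `d × n` integer matrix, given by its columns `a : Fin n → Lat d`,
with `ℤA = ℤ^d` (`SpansZ`) and `ℕA` pointed (`Pointed`).  Faces, semigroups, graded
modules, quasidegree sets, the dualizing complex `ω•_{S_A}` and the Ishida complexes
`℧•_F` are formalized below; all cohomology statements are expressed via the
(ℤ^d-)graded components of these complexes.
-/

namespace GKZ

open scoped Classical

noncomputable section

abbrev Lat (d : ℕ) := Fin d → ℤ
abbrev CS (d : ℕ) := Fin d → ℂ
abbrev Laur (d : ℕ) := AddMonoidAlgebra ℂ (Lat d)

/-- Inclusion ℤ^d ⊆ ℂ^d. -/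
def toC {d : ℕ} (α : Lat d) : CS d := fun i => (α i : ℂ)
/-- Inclusion ℤ^d ⊆ ℝ^d. -/
def toR {d : ℕ} (α : Lat d) : Fin d → ℝ := fun i => (α i : ℝ)
/-- The monomial t^α in the Laurent polynomial ring ℂ[ℤ^d]. -/
def mono {d : ℕ} (α : Lat d) : Laur d := AddMonoidAlgebra.single α 1

variable {d n : ℕ}

/-- The affine semigroup ℕA generated by the columns of `A`. -/
def NA (a : Fin n → Lat d) : AddSubmonoid (Lat d) := AddSubmonoid.closure (Set.range a)

/-- ℕA is pointed: ℕA ∩ (−ℕA) = {0}. -/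
def Pointed (a : Fin n → Lat d) : Prop := ∀ x ∈ NA a, -x ∈ NA a → x = 0

/-- ℤA = ℤ^d. -/
def SpansZ (a : Fin n → Lat d) : Prop :=
  AddSubgroup.closure (Set.range a) = (⊤ : AddSubgroup (Lat d))

/-- The real cone ℝ₊F spanned by the columns indexed by `F`. -/
def cone (a : Fin n → Lat d) (F : Set (Fin n)) : Set (Fin d → ℝ) :=
  { x | ∃ c : Fin n → ℝ, (∀ i, 0 ≤ c i) ∧ (∀ i, i ∉ F → c i = 0) ∧ x = ∑ i, c i • toR (a i) }

/-- `F` is a face of `A`: ℝ₊F is a face of the cone ℝ₊A, and `F` consists of all the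
columns of `A` lying on that face. -/
def IsFace (a : Fin n → Lat d) (F : Set (Fin n)) : Prop :=
  (∀ x y, x ∈ cone a Set.univ → y ∈ cone a Set.univ →
      x + y ∈ cone a F → x ∈ cone a F ∧ y ∈ cone a F) ∧
  (∀ i, toR (a i) ∈ cone a F → i ∈ F)

/-- ℕF. -/
def NFace (a : Fin n → Lat d) (F : Set (Fin n)) : AddSubmonoid (Lat d) :=
  AddSubmonoid.closure (a '' F)

/-- ℤF. -/
def ZFace (a : Fin n → Lat d) (F : Set (Fin n)) : AddSubgroup (Lat d) :=
  AddSubgroup.closure (a '' F)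

/-- ℂF ⊆ ℂ^d. -/
def CFace (a : Fin n → Lat d) (F : Set (Fin n)) : Submodule ℂ (CS d) :=
  Submodule.span ℂ (toC '' (a '' F))

/-- d_F, the rank of ℤF. -/
def dimF (a : Fin n → Lat d) (F : Set (Fin n)) : ℕ :=
  Module.finrank ℤ (Submodule.span ℤ (a '' F))

/-- σ_F, the sum of the columns of F. -/
def sigmaF (a : Fin n → Lat d) (F : Set (Fin n)) : Lat d :=
  ∑ i : Fin n, if i ∈ F then a i else 0

/-- ε_A = a_1 + ⋯ + a_n. -/
def epsA (a : Fin n → Lat d) : Lat d := ∑ i : Fin n, a i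

/-- ℕA − ℕF ⊆ ℤ^d. -/
def NAmNF (a : Fin n → Lat d) (F : Set (Fin n)) : Set (Lat d) :=
  {γ | ∃ u ∈ NA a, ∃ v ∈ NFace a F, γ = u - v}

/-- ℕF − ℕA ⊆ ℤ^d. -/
def NFmNA (a : Fin n → Lat d) (F : Set (Fin n)) : Set (Lat d) :=
  {γ | ∃ u ∈ NFace a F, ∃ v ∈ NA a, γ = u - v}

/-- ℕF − ℕH ⊆ ℤ^d. -/
def NFmNH (a : Fin n → Lat d) (F H : Set (Fin n)) : Set (Lat d) :=
  {γ | ∃ u ∈ NFace a F, ∃ v ∈ NFace a H, γ = u - v}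

/-- ℕA is normal: ℕA = ℤ^d ∩ ℝ₊A. -/
def Normal (a : Fin n → Lat d) : Prop :=
  ∀ γ : Lat d, γ ∈ NA a ↔ toR γ ∈ cone a Set.univ

/-- The Zariski closure of a subset of ℂ^d. -/
def zClosure {d : ℕ} (T : Set (CS d)) : Set (CS d) :=
  {x | ∀ p : MvPolynomial (Fin d) ℂ, (∀ y ∈ T, MvPolynomial.eval y p = 0) →
    MvPolynomial.eval x p = 0}

def IsZClosed {d : ℕ} (Z : Set (CS d)) : Prop := zClosure Z ⊆ Z

/-- Irreducibility of a subset of ℂ^d in the Zariski topology. -/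
def ZIrred {d : ℕ} (Z : Set (CS d)) : Prop :=
  Z.Nonempty ∧ ∀ C₁ C₂ : Set (CS d), IsZClosed C₁ → IsZClosed C₂ →
    Z ⊆ C₁ ∪ C₂ → Z ⊆ C₁ ∨ Z ⊆ C₂

/-- Krull (topological) dimension of a subset of ℂ^d with the Zariski topology:
the Krull dimension of the poset of irreducible Zariski-closed subsets contained in it. -/
def zdim {d : ℕ} (Z : Set (CS d)) : WithBot ℕ∞ :=
  Order.krullDim {C : Set (CS d) // C ⊆ Z ∧ IsZClosed C ∧ ZIrred C}

/-- `Z` is an irreducible component of `W`: a maximal irreducible Zariski-closed subset. -/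
def IsIrredComp {d : ℕ} (Z W : Set (CS d)) : Prop :=
  Z ⊆ W ∧ IsZClosed Z ∧ ZIrred Z ∧
    ∀ Z' : Set (CS d), IsZClosed Z' → ZIrred Z' → Z ⊆ Z' → Z' ⊆ W → Z' = Z

/-- The type of faces of `A`. -/
def FaceT (a : Fin n → Lat d) := {G : Set (Fin n) // IsFace a G}

instance (a : Fin n → Lat d) : Finite (FaceT a) := by
  unfold FaceT; infer_instance

noncomputable instance (a : Fin n → Lat d) : Fintype (FaceT a) := Fintype.ofFinite _

/-- Degree set of the localization M[∂^{−G}] of the monomial module with degree set `E`: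
the set E − ℕG. -/
def locE (a : Fin n → Lat d) (E : Set (Lat d)) (G : Set (Fin n)) : Set (Lat d) :=
  {γ | ∃ f ∈ NFace a G, γ + f ∈ E}

/-- Functions supported on a subset, as a ℂ-submodule of the function space. -/
def funSupported {ι : Type*} (S : Set ι) : Submodule ℂ (ι → ℂ) where
  carrier := {c | ∀ i, i ∉ S → c i = 0}
  add_mem' := by
    intro x y hx hy i hi
    simp only [Set.mem_setOf_eq] at hx hy
    simp [Pi.add_apply, hx i hi, hy i hi]
  zero_mem' := by intro i _; rfl
  smul_mem' := by
    intro r x hx i hi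
    simp only [Set.mem_setOf_eq] at hx
    simp [Pi.smul_apply, hx i hi]

/-- The degree-γ part of the term of the Ishida complex ℧•_F(M) (base face `F`, monomial
module with degree set `E`) whose summands are indexed by the faces of absolute dimension
`j` (cohomological degree `j − d_F`): functions on the faces `G ⊇ F` with `d_G = j` and
`γ ∈ E − ℕG`. -/
def ishChain (a : Fin n → Lat d) (E : Set (Lat d)) (F : Set (Fin n)) (j : ℤ) (γ : Lat d) :
    Submodule ℂ (FaceT a → ℂ) :=
  funSupported {G : FaceT a | F ⊆ G.1 ∧ (dimF a G.1 : ℤ) = j ∧ γ ∈ locE a E G.1}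

/-- The differential of the Ishida complex (in each ℤ^d-degree): the component from a face
`G'` into a face `G''` covering it is `ε G' G''` times the natural localization map. -/
def ishDelta (a : Fin n → Lat d) (ε : Set (Fin n) → Set (Fin n) → ℂ) :
    (FaceT a → ℂ) →ₗ[ℂ] (FaceT a → ℂ) where
  toFun c := fun G'' => ∑ G' : FaceT a,
    if G'.1 ⊆ G''.1 ∧ dimF a G''.1 = dimF a G'.1 + 1 then ε G'.1 G''.1 * c G' else 0
  map_add' x y := by
    funext G''
    simp only [Pi.add_apply, ← Finset.sum_add_distrib]
    refine Finset.sum_congr rfl fun G' _ => ?_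
    by_cases h : G'.1 ⊆ G''.1 ∧ dimF a G''.1 = dimF a G'.1 + 1
    · simp [h, mul_add]
    · simp [h]
  map_smul' r x := by
    funext G''
    simp only [Pi.smul_apply, smul_eq_mul, RingHom.id_apply, Finset.mul_sum]
    refine Finset.sum_congr rfl fun G' _ => ?_
    by_cases h : G'.1 ⊆ G''.1 ∧ dimF a G''.1 = dimF a G'.1 + 1
    · simp only [h, and_self, if_true]; ring
    · simp [h]

/-- Degree-γ cocycles of the Ishida complex at absolute dimension `j`. -/
def ishZ (a : Fin n → Lat d) (E : Set (Lat d)) (ε : Set (Fin n) → Set (Fin n) → ℂ)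
    (F : Set (Fin n)) (j : ℤ) (γ : Lat d) : Submodule ℂ (FaceT a → ℂ) :=
  ishChain a E F j γ ⊓ LinearMap.ker (ishDelta a ε)

/-- Degree-γ coboundaries of the Ishida complex at absolute dimension `j`. -/
def ishB (a : Fin n → Lat d) (E : Set (Lat d)) (ε : Set (Fin n) → Set (Fin n) → ℂ)
    (F : Set (Fin n)) (j : ℤ) (γ : Lat d) : Submodule ℂ (FaceT a → ℂ) :=
  Submodule.map (ishDelta a ε) (ishChain a E F (j - 1) γ)

/-- The degree-γ component of the cohomology of the Ishida complex ℧•_F(M) at absolute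
dimension `j` (cohomological degree `j − d_F`). -/
abbrev ishH (a : Fin n → Lat d) (E : Set (Lat d)) (ε : Set (Fin n) → Set (Fin n) → ℂ)
    (F : Set (Fin n)) (j : ℤ) (γ : Lat d) :=
  ↥(ishZ a E ε F j γ) ⧸
    Submodule.comap (ishZ a E ε F j γ).subtype (ishB a E ε F j γ)

/-- Nonvanishing of the degree-γ component of the cohomology of the Ishida complex. -/
def ishHne (a : Fin n → Lat d) (E : Set (Lat d)) (ε : Set (Fin n) → Set (Fin n) → ℂ)
    (F : Set (Fin n)) (j : ℤ) (γ : Lat d) : Prop :=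
  ¬ (ishZ a E ε F j γ ≤ ishB a E ε F j γ)

/-- Degree-γ part of the term of ω•_{S_A} in cohomological degree `i`:
functions on the faces `G` with `d_{A/G} = i` and `γ ∈ ℕG − ℕA`. -/
def omChain (a : Fin n → Lat d) (i : ℤ) (γ : Lat d) : Submodule ℂ (FaceT a → ℂ) :=
  funSupported {G : FaceT a | (dimF a G.1 : ℤ) = (d : ℤ) - i ∧ γ ∈ NFmNA a G.1}

/-- Degree-γ part of the differential of ω•_{S_A}: the component from a face `G'` to a face
`G''` covered by it is `ε G' G''` times the natural projection ℂ{ℕG'−ℕA} → ℂ{ℕG''−ℕA}. -/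
def omDelta (a : Fin n → Lat d) (ε : Set (Fin n) → Set (Fin n) → ℂ) (γ : Lat d) :
    (FaceT a → ℂ) →ₗ[ℂ] (FaceT a → ℂ) where
  toFun c := fun G'' =>
    if γ ∈ NFmNA a G''.1 then
      ∑ G' : FaceT a,
        if G''.1 ⊆ G'.1 ∧ dimF a G'.1 = dimF a G''.1 + 1 then ε G'.1 G''.1 * c G' else 0
    else 0
  map_add' x y := by
    funext G''
    by_cases hγ : γ ∈ NFmNA a G''.1
    · simp only [Pi.add_apply, hγ, if_true, ← Finset.sum_add_distrib]
      refine Finset.sum_congr rfl fun G' _ => ?_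
      by_cases h : G''.1 ⊆ G'.1 ∧ dimF a G'.1 = dimF a G''.1 + 1
      · simp [h, mul_add]
      · simp [h]
    · simp [hγ]
  map_smul' r x := by
    funext G''
    by_cases hγ : γ ∈ NFmNA a G''.1
    · simp only [Pi.smul_apply, smul_eq_mul, RingHom.id_apply, hγ, if_true, Finset.mul_sum]
      refine Finset.sum_congr rfl fun G' _ => ?_
      by_cases h : G''.1 ⊆ G'.1 ∧ dimF a G'.1 = dimF a G''.1 + 1
      · simp only [h, and_self, if_true]; ring
      · simp [h]
    · simp [hγ]

/-- Degree-γ cocycles of ω•_{S_A} in cohomological degree `i`. -/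
def omZ (a : Fin n → Lat d) (ε : Set (Fin n) → Set (Fin n) → ℂ) (i : ℤ) (γ : Lat d) :
    Submodule ℂ (FaceT a → ℂ) :=
  omChain a i γ ⊓ LinearMap.ker (omDelta a ε γ)

/-- Degree-γ coboundaries of ω•_{S_A} in cohomological degree `i`. -/
def omB (a : Fin n → Lat d) (ε : Set (Fin n) → Set (Fin n) → ℂ) (i : ℤ) (γ : Lat d) :
    Submodule ℂ (FaceT a → ℂ) :=
  Submodule.map (omDelta a ε γ) (omChain a (i - 1) γ)

/-- Nonvanishing of H^i(ω•_{S_A})_γ. -/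
def omHne (a : Fin n → Lat d) (ε : Set (Fin n) → Set (Fin n) → ℂ) (i : ℤ) (γ : Lat d) : Prop :=
  ¬ (omZ a ε i γ ≤ omB a ε i γ)

/-- A ℤ^d-graded S_A-module, presented by its grading together with the (degree-shifting)
action of the monomials t^u, u ∈ ℕA. -/
structure GradedSAMod (a : Fin n → Lat d) (M : Type) [AddCommGroup M] [Module ℂ M] where
  decomp : Lat d → Submodule ℂ M
  internal : DirectSum.IsInternal decomp
  act : (u : Lat d) → u ∈ NA a → (M →ₗ[ℂ] M)
  act_zero : ∀ h0 : (0 : Lat d) ∈ NA a, act 0 h0 = LinearMap.id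
  act_add : ∀ (u : Lat d) (hu : u ∈ NA a) (v : Lat d) (hv : v ∈ NA a) (huv : u + v ∈ NA a),
    act (u + v) huv = (act u hu).comp (act v hv)
  act_grade : ∀ (u : Lat d) (hu : u ∈ NA a) (γ : Lat d), ∀ m ∈ decomp γ,
    act u hu m ∈ decomp (γ + u)

/-- Finite generation over S_A. -/
def GradedSAMod.FGmod {a : Fin n → Lat d} {M : Type} [AddCommGroup M] [Module ℂ M]
    (g : GradedSAMod a M) : Prop :=
  ∃ S : Finset M, ∀ m : M,
    m ∈ Submodule.span ℂ {x | ∃ u, ∃ hu : u ∈ NA a, ∃ s ∈ S, x = g.act u hu s}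

/-- Degrees of nonzero homogeneous elements of `M` that survive in the localization
`M[∂^{−H}]` (i.e. are killed by no power of t^{σ_H}). -/
def GradedSAMod.survTdeg {a : Fin n → Lat d} {M : Type} [AddCommGroup M] [Module ℂ M]
    (g : GradedSAMod a M) (H : Set (Fin n)) : Set (Lat d) :=
  {γ | ∃ m ∈ g.decomp γ, m ≠ 0 ∧ ∀ (k : ℕ) (hk : k • sigmaF a H ∈ NA a), g.act _ hk m ≠ 0}

/-- The quasidegree set of the localization `M[∂^{−H}]` of a finitely generated graded
module `M`: the union over `k` of the Zariski closures of the true degree sets of the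
finitely generated graded submodules t^{−kσ_H}·M of the localization. -/
def GradedSAMod.qdegLoc {a : Fin n → Lat d} {M : Type} [AddCommGroup M] [Module ℂ M]
    (g : GradedSAMod a M) (H : Set (Fin n)) : Set (CS d) :=
  ⋃ k : ℕ, zClosure (toC '' {γ : Lat d | γ + k • sigmaF a H ∈ g.survTdeg H})

/-- A ℂ-submodule is graded: it is spanned by its homogeneous elements. -/
def IsGradedSubC {d : ℕ} {M : Type} [AddCommGroup M] [Module ℂ M]
    (decomp : Lat d → Submodule ℂ M) (N : Submodule ℂ M) : Prop :=
  N = Submodule.span ℂ ((N : Set M) ∩ ⋃ γ : Lat d, (decomp γ : Set M))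

/-- A ℂ-submodule is an S_A-submodule: stable under the monomial action. -/
def IsStableSub {a : Fin n → Lat d} {M : Type} [AddCommGroup M] [Module ℂ M]
    (g : GradedSAMod a M) (N : Submodule ℂ M) : Prop :=
  ∀ (u : Lat d) (hu : u ∈ NA a), ∀ m ∈ N, g.act u hu m ∈ N

/-- The semigroup ring S_A = ℂ[ℕA] as a subalgebra of ℂ[ℤ^d]. -/
def SAlg (a : Fin n → Lat d) : Subalgebra ℂ (Laur d) :=
  Algebra.adjoin ℂ {x | ∃ α ∈ NA a, x = mono α}

/-- The monomial t^u, u ∈ ℕA, as an element of S_A. -/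
def smono (a : Fin n → Lat d) (u : Lat d) (hu : u ∈ NA a) : ↥(SAlg a) :=
  ⟨mono u, Algebra.subset_adjoin ⟨u, hu, rfl⟩⟩

/-- The underlying ℂ-vector space of the monomial module ℂ{E}: finitely supported
functions on `E`. -/
abbrev wMod (d : ℕ) (E : Set (Lat d)) := ↥(Finsupp.supported ℂ ℂ E)

/-- The action of the monomial t^w on ℂ{E}: shift the degree by `w`, truncate back to `E`. -/
def wAct {d : ℕ} (E : Set (Lat d)) (w : Lat d) : wMod d E →ₗ[ℂ] wMod d E :=
  (Finsupp.restrictDom ℂ ℂ E).comp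
    ((Finsupp.lmapDomain ℂ ℂ (fun γ => γ + w)).comp (Finsupp.supported ℂ ℂ E).subtype)

/-- The elements annihilated by some power of the ideal generated by the t^{a_i}, i ∉ F. -/
def torsionAt (a : Fin n → Lat d) (F : Set (Fin n)) {ML : Type} [AddCommGroup ML]
    [Module ℂ ML] (TL : (u : Lat d) → u ∈ NA a → (ML →ₗ[ℂ] ML)) : Set ML :=
  {y | ∃ k : ℕ, ∀ f : Fin k → Fin n, (∀ j, f j ∉ F) →
    ∀ h : (∑ j, a (f j)) ∈ NA a, TL (∑ j, a (f j)) h y = 0}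

/-- The toric ideal I_A ⊆ R_A = ℂ[∂_1,…,∂_n]. -/
def toricIdeal (a : Fin n → Lat d) : Ideal (MvPolynomial (Fin n) ℂ) :=
  RingHom.ker (MvPolynomial.aeval (fun i => mono (a i)) : MvPolynomial (Fin n) ℂ →ₐ[ℂ] Laur d)

/-- The ideal I_F^A = I_A + ⟨∂_i : a_i ∉ F⟩ of R_A. -/
def IFA (a : Fin n → Lat d) (F : Set (Fin n)) : Ideal (MvPolynomial (Fin n) ℂ) :=
  toricIdeal a ⊔ Ideal.span {p | ∃ i, i ∉ F ∧ p = MvPolynomial.X i}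

/-- An R_A-submodule is graded: it is spanned by its homogeneous elements. -/
def IsGradedSubR {d n : ℕ} {M : Type} [AddCommGroup M] [Module ℂ M]
    [Module (MvPolynomial (Fin n) ℂ) M]
    (decomp : Lat d → Submodule ℂ M) (N : Submodule (MvPolynomial (Fin n) ℂ) M) : Prop :=
  N = Submodule.span (MvPolynomial (Fin n) ℂ) ((N : Set M) ∩ ⋃ γ : Lat d, (decomp γ : Set M))

/-- `h` is the primitive integral support function of the facet `G`. -/
def IsPISF (a : Fin n → Lat d) (G : Set (Fin n)) (h : Lat d →ₗ[ℤ] ℤ) : Prop :=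
  (∃ x, h x = 1) ∧ (∀ i, 0 ≤ h (a i)) ∧ (∀ i, h (a i) = 0 ↔ i ∈ G)

/-- The ℂ-linear extension of an integral linear form to ℂ^d. -/
def hC {d : ℕ} (h : Lat d →ₗ[ℤ] ℤ) (β : CS d) : ℂ :=
  ∑ j : Fin d, β j * ((h (Pi.single j 1) : ℤ) : ℂ)

/-!
A face `H` with `d_H = d` is all of `A`: its columns span `ℝ^d`, so any column `a_i` is a
real combination `∑ r_j a_j` of them, and adding `∑ (λ - r_j) a_j ∈ ℝ₊H` for large `λ` gives
`λ σ_H ∈ ℝ₊H`, whence `a_i ∈ ℝ₊H` by the face property. Hence `℧•_F` and `℧•_G` have the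
same top term `S_A[∂^{-A}]` and the same top cocycles, while every coboundary of `℧•_G` is one
of `℧•_F`. So the top cohomology of `℧•_G` surjects onto that of `℧•_F`, degree by degree, and
the quasidegrees of the latter lie among those of the former.
-/

lemma cone_mono (a : Fin n → Lat d) {F G : Set (Fin n)} (h : F ⊆ G) : cone a F ⊆ cone a G := by
  rintro x ⟨c, hc0, hcF, rfl⟩
  exact ⟨c, hc0, fun i hi => hcF i (fun hiF => hi (h hiF)), rfl⟩

lemma toR_mem_cone (a : Fin n → Lat d) {F : Set (Fin n)} {i : Fin n} (hi : i ∈ F) :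
    toR (a i) ∈ cone a F := by
  refine ⟨Pi.single i 1, fun j => ?_, fun j hj => ?_, ?_⟩
  · by_cases hj : j = i <;> simp [hj]
  · simp [show j ≠ i from fun h => hj (h ▸ hi)]
  · simp [Pi.single_apply]

lemma toR_mem_span_toR {S : Set (Lat d)} {x : Lat d} (hx : x ∈ Submodule.span ℤ S) :
    toR x ∈ Submodule.span ℝ (toR '' S) := by
  let L : Lat d →ₗ[ℤ] (Fin d → ℝ) := (Int.castAddHom ℝ).toIntLinearMap.compLeft (Fin d)
  have hL : ⇑L = toR := rfl
  apply Submodule.span_le_restrictScalars ℤ ℝ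
  rw [← hL, ← Submodule.map_span]
  exact Submodule.mem_map_of_mem hx

lemma span_toR_eq_top_of_dimF_eq (a : Fin n → Lat d) {H : Set (Fin n)} (hdim : dimF a H = d) :
    Submodule.span ℝ (toR '' (a '' H)) = ⊤ := by
  let N := Submodule.span ℤ (a '' H)
  let b := Module.finBasisOfFinrankEq ℤ N hdim
  have hind : LinearIndependent ℝ (fun k => toR (b k : Lat d)) := by
    have h := (linearIndependent_algebraMap_comp_iff (S := ℝ) (v := fun k => (b k : Lat d))).mpr
      (b.linearIndependent.map' N.subtype N.ker_subtype)
    convert h using 1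
    · ext k j
      simp [toR]
    · rfl
  rw [eq_top_iff, ← hind.span_eq_top_of_card_eq_finrank' (by simp), Submodule.span_le]
  rintro _ ⟨k, rfl⟩
  exact toR_mem_span_toR (b k).2

lemma IsFace.mem_of_toR_mem_span {a : Fin n → Lat d} {H : Set (Fin n)} (hH : IsFace a H)
    {i : Fin n} (hi : toR (a i) ∈ Submodule.span ℝ (toR '' (a '' H))) : i ∈ H := by
  rw [Set.image_image, Finsupp.mem_span_image_iff_linearCombination] at hi
  obtain ⟨r, hrH, hr⟩ := hi
  rw [Finsupp.linearCombination_apply, Finsupp.sum_fintype _ _ (by simp)] at hr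
  have hr_out : ∀ j, j ∉ H → r j = 0 := fun j hj =>
    Finsupp.notMem_support_iff.mp fun h => hj (hrH h)
  set lam := ∑ j, |r j|
  have hr_le : ∀ j, r j ≤ lam := fun j => (le_abs_self _).trans
    (Finset.single_le_sum (fun k _ => abs_nonneg (r k)) (Finset.mem_univ j))
  let c : Fin n → ℝ := fun j => if j ∈ H then lam else 0
  have hc_out : ∀ j, j ∉ H → c j = 0 := fun j hj => if_neg hj
  -- `a i + ∑ (c j - r j) a j = lam σ_H` lies in `ℝ₊H`, with both summands in `ℝ₊A`.
  apply hH.2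
  refine (hH.1 _ (∑ j, (c j - r j) • toR (a j)) (toR_mem_cone a (Set.mem_univ i))
    (cone_mono a (Set.subset_univ H) ⟨fun j => c j - r j, fun j => ?_, fun j hj => ?_, rfl⟩)
    ⟨c, fun j => ?_, hc_out, ?_⟩).1
  · by_cases hj : j ∈ H
    · simpa [c, hj] using hr_le j
    · simp [c, hj, hr_out j hj]
  · simp [hc_out j hj, hr_out j hj]
  · by_cases hj : j ∈ H
    · simpa [c, hj] using Finset.sum_nonneg fun k _ => abs_nonneg (r k)
    · simp [c, hj]
  · rw [← hr, ← Finset.sum_add_distrib]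
    simp only [sub_smul, add_sub_cancel]

lemma IsFace.eq_univ_of_dimF_eq {a : Fin n → Lat d} {H : Set (Fin n)} (hH : IsFace a H)
    (hdim : dimF a H = d) : H = Set.univ :=
  Set.eq_univ_of_forall fun _ =>
    hH.mem_of_toR_mem_span (span_toR_eq_top_of_dimF_eq a hdim ▸ Submodule.mem_top)

lemma NFace_mono (a : Fin n → Lat d) {F G : Set (Fin n)} (h : F ⊆ G) :
    NFace a F ≤ NFace a G :=
  AddSubmonoid.closure_mono (Set.image_mono h)

lemma locE_mono (a : Fin n → Lat d) (E : Set (Lat d)) {F G : Set (Fin n)} (h : F ⊆ G) :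
    locE a E F ⊆ locE a E G := fun _ ⟨f, hf, hfE⟩ => ⟨f, NFace_mono a h hf, hfE⟩

lemma ishChain_anti (a : Fin n → Lat d) (E : Set (Lat d)) {F G : Set (Fin n)} (hFG : F ⊆ G)
    (j : ℤ) (γ : Lat d) : ishChain a E G j γ ≤ ishChain a E F j γ :=
  fun _ hc H hH => hc H fun h => hH ⟨hFG.trans h.1, h.2⟩

lemma ishDelta_mem_ishChain {a : Fin n → Lat d} {E : Set (Lat d)}
    {ε : Set (Fin n) → Set (Fin n) → ℂ} {G : Set (Fin n)} {j : ℤ} {γ : Lat d}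
    {c : FaceT a → ℂ} (hc : c ∈ ishChain a E G j γ) :
    ishDelta a ε c ∈ ishChain a E G (j + 1) γ := by
  intro H hH
  refine Finset.sum_eq_zero fun H' _ => ?_
  split_ifs with hcover
  · suffices c H' = 0 by rw [this, mul_zero]
    refine hc H' fun ⟨hGH', hdim, hloc⟩ => hH ⟨hGH'.trans hcover.1, ?_,
      locE_mono a E hcover.1 hloc⟩
    rw [hcover.2, ← hdim]
    push_cast
    ring
  · rfl

lemma ishChain_top_eq (a : Fin n → Lat d) (E : Set (Lat d)) (F G : Set (Fin n)) (γ : Lat d) :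
    ishChain a E F d γ = ishChain a E G d γ := by
  have contains : ∀ H : FaceT a, (dimF a H.1 : ℤ) = d → ∀ K : Set (Fin n), K ⊆ H.1 :=
    fun H hdim K => (H.2.eq_univ_of_dimF_eq (by exact_mod_cast hdim)).symm ▸ Set.subset_univ K
  unfold ishChain
  congr 1
  ext H
  exact ⟨fun ⟨_, hdim, hloc⟩ => ⟨contains H hdim G, hdim, hloc⟩,
    fun ⟨_, hdim, hloc⟩ => ⟨contains H hdim F, hdim, hloc⟩⟩

lemma ishZ_top_eq (a : Fin n → Lat d) (E : Set (Lat d)) (ε : Set (Fin n) → Set (Fin n) → ℂ)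
    (F G : Set (Fin n)) (γ : Lat d) : ishZ a E ε F d γ = ishZ a E ε G d γ := by
  rw [ishZ, ishZ, ishChain_top_eq a E F G]

lemma ishB_anti (a : Fin n → Lat d) (E : Set (Lat d)) (ε : Set (Fin n) → Set (Fin n) → ℂ)
    {F G : Set (Fin n)} (hFG : F ⊆ G) (j : ℤ) (γ : Lat d) :
    ishB a E ε G j γ ≤ ishB a E ε F j γ :=
  Submodule.map_mono (ishChain_anti a E hFG (j - 1) γ)

lemma ishHne_top_of_subset {a : Fin n → Lat d} {E : Set (Lat d)}
    {ε : Set (Fin n) → Set (Fin n) → ℂ} {F G : Set (Fin n)} (hFG : F ⊆ G) {γ : Lat d}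
    (hF : ishHne a E ε F d γ) : ishHne a E ε G d γ := fun hG =>
  hF ((ishZ_top_eq a E ε F G γ).le.trans (hG.trans (ishB_anti a E ε hFG d γ)))

lemma zClosure_mono {S T : Set (CS d)} (h : S ⊆ T) : zClosure S ⊆ zClosure T :=
  fun _ hx p hp => hx p fun y hy => hp y (h hy)

theorem ishida_subcomplex_top_surjection_general
    {d n : ℕ} (a : Fin n → Lat d)
    (F G : Set (Fin n)) (hFG : F ⊆ G)
    (ε : Set (Fin n) → Set (Fin n) → ℂ) :
    (∀ (j : ℤ) (γ : Lat d),
      ishChain a (NA a : Set (Lat d)) G j γ ≤ ishChain a (NA a : Set (Lat d)) F j γ) ∧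
    (∀ (j : ℤ) (γ : Lat d) (c : FaceT a → ℂ), c ∈ ishChain a (NA a : Set (Lat d)) G j γ →
      ishDelta a ε c ∈ ishChain a (NA a : Set (Lat d)) G (j + 1) γ) ∧
    (∀ γ : Lat d, ishZ a (NA a : Set (Lat d)) ε F (d : ℤ) γ ≤
      ishZ a (NA a : Set (Lat d)) ε G (d : ℤ) γ ⊔ ishB a (NA a : Set (Lat d)) ε F (d : ℤ) γ) ∧
    zClosure (toC '' {γ : Lat d | ishHne a (NA a : Set (Lat d)) ε F (d : ℤ) γ})
      ⊆ zClosure (toC '' {γ : Lat d | ishHne a (NA a : Set (Lat d)) ε G (d : ℤ) γ}) :=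
  ⟨ishChain_anti a _ hFG,
    fun _ _ _ => ishDelta_mem_ishChain,
    fun γ => (ishZ_top_eq a _ ε F G γ).le.trans le_sup_left,
    zClosure_mono (Set.image_mono fun _ => ishHne_top_of_subset hFG)⟩

/-- For faces `F ⪯ G ⪯ A` (with an incidence function for ℧•_F restricting
to one for ℧•_G), ℧•_G (placed in the cohomological degrees given by absolute face
dimension) is a subcomplex of ℧•_F, and the induced map on top cohomology
H^{d_{A/G}}(℧•_G) → H^{d_{A/F}}(℧•_F) is a degree-preserving surjection; consequently
qdeg H^{d_{A/F}}(℧•_F) ⊆ qdeg H^{d_{A/G}}(℧•_G).  (Degreewise: cochain inclusions,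
stability of the G-chains under the differential, and surjectivity on each graded
component of the top cohomology.) -/
theorem ishida_subcomplex_top_surjection
    {d n : ℕ} (hd : 0 < d) (hn : 0 < n) (a : Fin n → Lat d)
    (hZA : SpansZ a) (hPt : Pointed a)
    (F G : Set (Fin n)) (hF : IsFace a F) (hG : IsFace a G) (hFG : F ⊆ G)
    (ε : Set (Fin n) → Set (Fin n) → ℂ)
    (hval : ∀ G' G'' : FaceT a, G'.1 ⊆ G''.1 → dimF a G''.1 = dimF a G'.1 + 1 →
      ε G'.1 G''.1 = 1 ∨ ε G'.1 G''.1 = -1)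
    (hsqF : ∀ (γ : Lat d) (j : ℤ) (c : FaceT a → ℂ),
      c ∈ ishChain a (NA a : Set (Lat d)) F j γ → ishDelta a ε (ishDelta a ε c) = 0)
    (hsqG : ∀ (γ : Lat d) (j : ℤ) (c : FaceT a → ℂ),
      c ∈ ishChain a (NA a : Set (Lat d)) G j γ → ishDelta a ε (ishDelta a ε c) = 0) :
    (∀ (j : ℤ) (γ : Lat d),
      ishChain a (NA a : Set (Lat d)) G j γ ≤ ishChain a (NA a : Set (Lat d)) F j γ) ∧
    (∀ (j : ℤ) (γ : Lat d) (c : FaceT a → ℂ), c ∈ ishChain a (NA a : Set (Lat d)) G j γ →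
      ishDelta a ε c ∈ ishChain a (NA a : Set (Lat d)) G (j + 1) γ) ∧
    (∀ γ : Lat d, ishZ a (NA a : Set (Lat d)) ε F (d : ℤ) γ ≤
      ishZ a (NA a : Set (Lat d)) ε G (d : ℤ) γ ⊔ ishB a (NA a : Set (Lat d)) ε F (d : ℤ) γ) ∧
    zClosure (toC '' {γ : Lat d | ishHne a (NA a : Set (Lat d)) ε F (d : ℤ) γ})
      ⊆ zClosure (toC '' {γ : Lat d | ishHne a (NA a : Set (Lat d)) ε G (d : ℤ) γ}) :=
  ishida_subcomplex_top_surjection_general a F G hFG ε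

end

end GKZ
end

section
/- Let F ⪯ A be a face, M a finitely generated ℤ^d-graded S_A-submodule of ℂ[ℤ^d], and α ∈ ℕA. Then the endomorphism of H^{d_{A/F}}(℧•_F(M)) induced by multiplication by t^α is surjective; equivalently, for every γ ∈ ℤ^d, multiplication by t^α maps the degree-γ component H^{d_{A/F}}(℧•_F(M))_γ onto the degree-(γ+α) component H^{d_{A/F}}(℧•_F(M))_{γ+α}. -/
/-!
Common setup: `A` is a `d × n` integer matrix, given by its columns `a : Fin n → Lat d`,
with `ℤA = ℤ^d` (`SpansZ`) and `ℕA` pointed (`Pointed`).  Faces, semigroups, graded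
modules, quasidegree sets, the dualizing complex `ω•_{S_A}` and the Ishida complexes
`℧•_F` are formalized below; all cohomology statements are expressed via the
(ℤ^d-)graded components of these complexes.
-/

namespace GKZ

open scoped Classical

noncomputable section

variable {d n : ℕ}

/-- Coordinatewise cast ℤ^d → ℚ^d as a ℤ-linear map. -/
def castQ {d : ℕ} : Lat d →ₗ[ℤ] (Fin d → ℚ) where
  toFun x := fun t => (x t : ℚ)
  map_add' x y := by funext t; push_cast; simp
  map_smul' r x := by funext t; push_cast; simp

lemma castQ_inj {d : ℕ} : Function.Injective (castQ (d := d)) := by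
  intro x y h
  funext t
  have h2 : (x t : ℚ) = (y t : ℚ) := congrFun h t
  exact_mod_cast h2

lemma key_span {d n : ℕ} (a : Fin n → Lat d) (G : Set (Fin n))
    (hdim : dimF a G = d) (x : Lat d) :
    castQ x ∈ Submodule.span ℚ (castQ '' (a '' G)) := by
  classical
  set NZ := Submodule.span ℤ (a '' G) with hNZ
  obtain ⟨nn, bN⟩ := Submodule.basisOfPid (Pi.basisFun ℤ (Fin d)) NZ
  have hnn : nn = d := by
    have h1 := Module.finrank_eq_card_basis bN
    have h2 : dimF a G = Module.finrank ℤ NZ := rfl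
    rw [h2, h1] at hdim
    simpa using hdim
  have h1 : LinearIndependent ℤ (fun k => ((bN k : Lat d))) :=
    bN.linearIndependent.map' NZ.subtype (Submodule.ker_subtype NZ)
  have hv : LinearIndependent ℤ (fun k => castQ ((bN k : Lat d))) :=
    h1.map' castQ (LinearMap.ker_eq_bot.mpr castQ_inj)
  have hvQ : LinearIndependent ℚ (fun k => castQ ((bN k : Lat d))) :=
    (LinearIndependent.iff_fractionRing ℤ ℚ).mp hv
  have hspan : Submodule.span ℚ (Set.range fun k => castQ ((bN k : Lat d))) = ⊤ :=
    hvQ.span_eq_top_of_card_eq_finrank'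
      (by rw [Module.finrank_fintype_fun_eq_card]; simpa using hnn)
  have hle : Submodule.span ℚ (Set.range fun k => castQ ((bN k : Lat d))) ≤
      Submodule.span ℚ (castQ '' (a '' G)) := by
    rw [Submodule.span_le]
    rintro _ ⟨k, rfl⟩
    have hbk : ((bN k : Lat d)) ∈ NZ := (bN k).2
    have hmap : castQ ((bN k : Lat d)) ∈ Submodule.span ℤ (castQ '' (a '' G)) := by
      rw [← Submodule.map_span]
      exact ⟨_, hbk, rfl⟩
    have h2 : Submodule.span ℤ (castQ '' (a '' G)) ≤
        Submodule.restrictScalars ℤ (Submodule.span ℚ (castQ '' (a '' G))) := by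
      rw [Submodule.span_le]; exact fun y hy => Submodule.subset_span hy
    exact h2 hmap
  exact hle (hspan ▸ Submodule.mem_top)

/-- A face whose span has full rank is the whole set of columns. -/
lemma face_top {d n : ℕ} (a : Fin n → Lat d) (G : Set (Fin n))
    (hG : IsFace a G) (hdim : dimF a G = d) : G = Set.univ := by
  classical
  refine Set.eq_univ_of_forall fun i => ?_
  have hmem := key_span a G hdim (a i)
  rw [Submodule.mem_span_set'] at hmem
  obtain ⟨m, f, g, hg⟩ := hmem
  have hgk : ∀ k, ∃ j, j ∈ G ∧ (g k : Fin d → ℚ) = castQ (a j) := by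
    intro k
    obtain ⟨y, hy, hcy⟩ := (g k).2
    obtain ⟨j, hj, rfl⟩ := hy
    exact ⟨j, hj, hcy.symm⟩
  choose jf hjG hje using hgk
  have hreal : toR (a i) = ∑ k, (f k : ℝ) • toR (a (jf k)) := by
    funext t
    have h1 : (∑ k, f k • (g k : Fin d → ℚ)) t = castQ (a i) t := congrFun hg t
    simp only [Finset.sum_apply, Pi.smul_apply, smul_eq_mul] at h1
    have h2 : ∑ k, f k * ((a (jf k) t : ℚ)) = ((a i t : ℚ)) := by
      have h1' : ∑ k, f k * ((a (jf k) t : ℚ)) = castQ (a i) t := by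
        rw [← h1]
        refine Finset.sum_congr rfl fun k _ => ?_
        rw [hje k]
        rfl
      exact h1'
    have h3 := congrArg (fun q : ℚ => (q : ℝ)) h2
    push_cast at h3
    simpa [toR, Finset.sum_apply] using h3.symm
  set c : Fin n → ℝ := fun j => ∑ k ∈ Finset.univ.filter (fun k => jf k = j), (f k : ℝ)
    with hc
  have hsupp : ∀ j, j ∉ G → c j = 0 := by
    intro j hj
    refine Finset.sum_eq_zero fun k hk => ?_
    exact absurd ((Finset.mem_filter.mp hk).2 ▸ hjG k) hj
  have hcsum : ∑ j, c j • toR (a j) = toR (a i) := by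
    rw [hreal]
    calc ∑ j, c j • toR (a j)
        = ∑ j, ∑ k ∈ Finset.univ.filter (fun k => jf k = j), (f k : ℝ) • toR (a j) := by
          refine Finset.sum_congr rfl fun j _ => ?_
          rw [hc]
          exact Finset.sum_smul
      _ = ∑ j, ∑ k ∈ Finset.univ.filter (fun k => jf k = j),
            (f k : ℝ) • toR (a (jf k)) := by
          refine Finset.sum_congr rfl fun j _ => Finset.sum_congr rfl fun k hk => ?_
          rw [(Finset.mem_filter.mp hk).2]
      _ = ∑ k, (f k : ℝ) • toR (a (jf k)) := Finset.sum_fiberwise _ _ _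
  set Nb : ℝ := ∑ j, |c j| with hNb
  have hNb0 : 0 ≤ Nb := Finset.sum_nonneg fun j _ => abs_nonneg _
  have hNble : ∀ j, -c j ≤ Nb := fun j =>
    le_trans (neg_le_abs _)
      (Finset.single_le_sum (fun j _ => abs_nonneg (c j)) (Finset.mem_univ j))
  have hx : toR (a i) ∈ cone a Set.univ := by
    refine ⟨fun j => if j = i then 1 else 0, fun j => ?_,
      fun j hj => absurd (Set.mem_univ j) hj, ?_⟩
    · by_cases h : j = i <;> simp [h]
    · simp [ite_smul]
  have hy : (∑ j, (if j ∈ G then Nb else 0) • toR (a j)) ∈ cone a Set.univ := by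
    refine ⟨fun j => if j ∈ G then Nb else 0, fun j => ?_,
      fun j hj => absurd (Set.mem_univ j) hj, rfl⟩
    by_cases h : j ∈ G <;> simp [h, hNb0]
  have hxy : toR (a i) + ∑ j, (if j ∈ G then Nb else 0) • toR (a j) ∈ cone a G := by
    refine ⟨fun j => if j ∈ G then c j + Nb else 0, fun j => ?_, fun j hj => by simp [hj], ?_⟩
    · by_cases h : j ∈ G
      · have := hNble j; simp [h]; linarith
      · simp [h]
    · rw [← hcsum, ← Finset.sum_add_distrib]
      refine Finset.sum_congr rfl fun j _ => ?_
      by_cases hjG : j ∈ G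
      · simp [hjG, add_smul]
      · simp [hjG, hsupp j hjG]
  exact hG.2 i (hG.1 _ _ hx hy hxy).1

/-- For a face `F ⪯ A`, a finitely generated ℤ^d-graded S_A-submodule
`M` of ℂ[ℤ^d] (degree set `E`), and `α ∈ ℕA`, multiplication by t^α on the top cohomology
H^{d_{A/F}}(℧•_F(M)) is surjective: for every `γ`, it maps the degree-γ component onto the
degree-(γ+α) component (every degree-(γ+α) cohomology class is represented by a cocycle
coming from degree γ, multiplication by t^α being the identity on coordinates in the
degreewise model of the complex). -/
theorem top_local_cohomology_mult_surjective
    {d n : ℕ} (hd : 0 < d) (hn : 0 < n) (a : Fin n → Lat d)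
    (hZA : SpansZ a) (hPt : Pointed a)
    (F : Set (Fin n)) (hF : IsFace a F)
    (E : Set (Lat d))
    (hE : ∃ S : Finset (Lat d), E = ⋃ s ∈ S, {γ : Lat d | ∃ u ∈ NA a, γ = s + u})
    (α : Lat d) (hα : α ∈ NA a)
    (ε : Set (Fin n) → Set (Fin n) → ℂ)
    (hval : ∀ G' G'' : FaceT a, G'.1 ⊆ G''.1 → dimF a G''.1 = dimF a G'.1 + 1 →
      ε G'.1 G''.1 = 1 ∨ ε G'.1 G''.1 = -1)
    (hsq : ∀ (γ : Lat d) (j : ℤ) (c : FaceT a → ℂ),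
      c ∈ ishChain a E F j γ → ishDelta a ε (ishDelta a ε c) = 0) :
    ∀ γ : Lat d,
      ishZ a E ε F (d : ℤ) (γ + α) ≤ ishZ a E ε F (d : ℤ) γ ⊔ ishB a E ε F (d : ℤ) (γ + α) := by
  intro γ c hc
  obtain ⟨hchain, hker⟩ := hc
  refine Submodule.mem_sup_left (⟨?_, hker⟩ : c ∈ ishZ a E ε F (d : ℤ) γ)
  intro G hGn
  by_cases hG2 : F ⊆ G.1 ∧ (dimF a G.1 : ℤ) = (d : ℤ) ∧ (γ + α) ∈ locE a E G.1
  · exfalso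
    apply hGn
    obtain ⟨h1, h2, f0, hf0, hf0E⟩ := hG2
    have hdim : dimF a G.1 = d := by exact_mod_cast h2
    have hGu : G.1 = Set.univ := face_top a G.1 G.2 hdim
    have hαG : α ∈ NFace a G.1 := by
      rw [hGu]
      show α ∈ AddSubmonoid.closure (a '' Set.univ)
      rw [Set.image_univ]
      exact hα
    refine ⟨h1, h2, ⟨f0 + α, add_mem hf0 hαG, ?_⟩⟩
    have h3 : γ + (f0 + α) = γ + α + f0 := by abel
    rw [h3]
    exact hf0E
  · exact hchain G hG2

end

end GKZ
end
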